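/- arXiv:1711.01074 — 4 statements merged into one kernel-verified Lean document; each statement's English description precedes it below -/
import Mathlib

section
/- Let q be a prime power and m ≥ 2. Define δ = (q-1)q^{m-1} - 1. Then δ is a coset leader of its q-cyclotomic coset modulo q^m - 1, and every integer θ with 0 ≤ θ < q^m - 1 whose q-adic digit sum equals m(q-1) - 1 and which is a coset leader satisfies θ = δ. -/
/-!
Write `n = q ^ m - 1`. Adding `θ` and `n - θ` digitwise in base `q` produces no carries, so their
digit sums add up to `m (q - 1)`; the hypothesis on `θ` thus says that `n - θ` has digit sum `1`,
i.e. `θ = n - q ^ i` for some `i < m`. Multiplication by `q` modulo `n` permutes the numbers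
`n - q ^ i` cyclically (`i ↦ i + 1 mod m`), so the only coset leader among them is the least one,
`n - q ^ (m - 1) = δ`.
-/

namespace Nat

theorem digits_sum_eq_mod_add_digits_sum_div {b : ℕ} (hb : 1 < b) (n : ℕ) :
    (b.digits n).sum = n % b + (b.digits (n / b)).sum := by
  rcases n.eq_zero_or_pos with rfl | hn
  · simp
  · rw [digits_def' hb hn, List.sum_cons]

theorem digits_sum_eq_zero_iff {b n : ℕ} : (b.digits n).sum = 0 ↔ n = 0 := by
  refine ⟨fun h => by_contra fun hn => getLast_digit_ne_zero b hn ?_, fun h => by simp [h]⟩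
  exact List.sum_eq_zero_iff.mp h _ (List.getLast_mem _)

theorem exists_eq_pow_of_digits_sum_eq_one {b : ℕ} (hb : 1 < b) {n : ℕ}
    (h : (b.digits n).sum = 1) : ∃ i, n = b ^ i := by
  induction n using Nat.strong_induction_on with
  | _ n ih =>
    have hn : n ≠ 0 := by rintro rfl; simp at h
    rw [digits_sum_eq_mod_add_digits_sum_div hb] at h
    have hcases : n % b = 0 ∧ (b.digits (n / b)).sum = 1 ∨ n % b = 1 ∧ n / b = 0 := by
      rw [← digits_sum_eq_zero_iff (b := b) (n := n / b)]; omega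
    rcases hcases with ⟨hmod, hdiv⟩ | ⟨hmod, hdiv⟩
    · obtain ⟨i, hi⟩ := ih (n / b) (div_lt_self (pos_of_ne_zero hn) hb) hdiv
      exact ⟨i + 1, by rw [← div_add_mod n b, hmod, hi, pow_succ']; ring⟩
    · exact ⟨0, by rw [← div_add_mod n b, hmod, hdiv]; simp⟩

theorem digits_sum_add_digits_sum_pow_sub_one_sub {b : ℕ} (hb : 1 < b) :
    ∀ (m : ℕ) {n : ℕ}, n < b ^ m →
      (b.digits n).sum + (b.digits (b ^ m - 1 - n)).sum = m * (b - 1)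
  | 0, n, hn => by simp_all
  | m + 1, n, hn => by
    have hdiv : n / b < b ^ m := Nat.div_lt_of_lt_mul (by rwa [← pow_succ'])
    have hmod : n % b < b := mod_lt n (by omega)
    have hcompl : b ^ (m + 1) - 1 - n = (b - 1 - n % b) + b * (b ^ m - 1 - n / b) := by
      have := div_add_mod n b
      rw [pow_succ', Nat.mul_sub, Nat.mul_sub, mul_one]
      have : b * (n / b) + b ≤ b * b ^ m := by
        rw [← Nat.mul_succ]; exact Nat.mul_le_mul_left _ hdiv
      omega
    have hcompl_mod : (b ^ (m + 1) - 1 - n) % b = b - 1 - n % b := by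
      rw [hcompl, Nat.add_mul_mod_self_left, mod_eq_of_lt (by omega)]
    have hcompl_div : (b ^ (m + 1) - 1 - n) / b = b ^ m - 1 - n / b := by
      rw [hcompl, Nat.add_mul_div_left _ _ (by omega), div_eq_of_lt (by omega), zero_add]
    rw [digits_sum_eq_mod_add_digits_sum_div hb n,
      digits_sum_eq_mod_add_digits_sum_div hb (b ^ (m + 1) - 1 - n), hcompl_mod, hcompl_div]
    have := digits_sum_add_digits_sum_pow_sub_one_sub hb m hdiv
    rw [add_mul, one_mul]
    omega

theorem pow_modEq_pow_mod {q : ℕ} (hq : 0 < q) (m k : ℕ) :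
    q ^ k ≡ q ^ (k % m) [MOD q ^ m - 1] := by
  have h : q ^ m ≡ 1 [MOD q ^ m - 1] := modEq_sub (one_le_pow _ _ hq)
  calc q ^ k = (q ^ m) ^ (k / m) * q ^ (k % m) := by rw [← pow_mul, ← pow_add, div_add_mod]
    _ ≡ 1 ^ (k / m) * q ^ (k % m) [MOD q ^ m - 1] := (h.pow _).mul_right _
    _ = q ^ (k % m) := by rw [one_pow, one_mul]

theorem sub_mul_mod_of_mul_mod_ne_zero {n a k : ℕ} (ha : a ≤ n) (h : a * k % n ≠ 0) :
    (n - a) * k % n = n - a * k % n := by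
  have hn : 0 < n := pos_of_ne_zero (by rintro rfl; simp_all)
  have hsum : ((n - a) * k % n + a * k % n) % n = 0 := by
    rw [← add_mod, ← add_mul, Nat.sub_add_cancel ha, mul_mod_right]
  have h₁ := mod_lt ((n - a) * k) hn
  have h₂ := mod_lt (a * k) hn
  by_cases hle : n ≤ (n - a) * k % n + a * k % n
  · rw [mod_eq_sub_mod hle, mod_eq_of_lt (by omega)] at hsum
    omega
  · rw [mod_eq_of_lt (not_le.mp hle)] at hsum
    omega

theorem pow_lt_pow_sub_one {q m r : ℕ} (hq : 1 < q) (hm : 2 ≤ m) (hr : r < m) :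
    q ^ r < q ^ m - 1 := by
  have h₁ : q ^ r ≤ q ^ (m - 1) := Nat.pow_le_pow_right (by omega) (by omega)
  have h₂ : q ^ 1 ≤ q ^ (m - 1) := Nat.pow_le_pow_right (by omega) (by omega)
  have h₃ : q ^ m = q ^ (m - 1) * q := by rw [← pow_succ]; congr 1; omega
  have h₄ : q ^ (m - 1) * 2 ≤ q ^ (m - 1) * q := Nat.mul_le_mul_left _ hq
  rw [pow_one] at h₂
  omega

end Nat

open Nat

def IsCosetLeader (q m s : ℕ) : Prop :=
  ∀ j : ℕ, s ≤ s * q ^ j % (q ^ m - 1)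

theorem pow_sub_one_sub_pow_mul_pow_mod {q m i : ℕ} (hq : 1 < q) (hm : 2 ≤ m) (hi : i < m)
    (j : ℕ) : (q ^ m - 1 - q ^ i) * q ^ j % (q ^ m - 1) = q ^ m - 1 - q ^ ((i + j) % m) := by
  have hrot : q ^ i * q ^ j % (q ^ m - 1) = q ^ ((i + j) % m) := by
    rw [← pow_add, pow_modEq_pow_mod (by omega) m (i + j),
      mod_eq_of_lt (pow_lt_pow_sub_one hq hm (mod_lt _ (by omega)))]
  rw [sub_mul_mod_of_mul_mod_ne_zero (pow_lt_pow_sub_one hq hm hi).le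
    (by rw [hrot]; positivity), hrot]

theorem isCosetLeader_pow_sub_one_sub_pow_iff {q m i : ℕ} (hq : 1 < q) (hm : 2 ≤ m)
    (hi : i < m) : IsCosetLeader q m (q ^ m - 1 - q ^ i) ↔ i = m - 1 := by
  have hlt := pow_lt_pow_sub_one hq hm hi
  have hlt' := pow_lt_pow_sub_one hq hm (show m - 1 < m by omega)
  constructor
  · intro h
    have := h (m - 1 - i)
    rw [pow_sub_one_sub_pow_mul_pow_mod hq hm hi, show i + (m - 1 - i) = m - 1 by omega,
      mod_eq_of_lt (show m - 1 < m by omega)] at this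
    have : m - 1 ≤ i := (Nat.pow_le_pow_iff_right hq).mp (by omega)
    omega
  · rintro rfl j
    rw [pow_sub_one_sub_pow_mul_pow_mod hq hm hi]
    have : q ^ ((m - 1 + j) % m) ≤ q ^ (m - 1) :=
      Nat.pow_le_pow_right (by omega) (le_pred_of_lt (mod_lt _ (by omega)))
    omega

theorem exists_eq_pow_sub_one_sub_pow_of_digits_sum {q m θ : ℕ} (hq : 1 < q)
    (hθ : θ < q ^ m - 1) (hsum : (q.digits θ).sum = m * (q - 1) - 1) :
    ∃ i < m, θ = q ^ m - 1 - q ^ i := by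
  have hm : m ≠ 0 := by rintro rfl; simp at hθ
  have hpos : 0 < m * (q - 1) := Nat.mul_pos (pos_of_ne_zero hm) (by omega)
  have hcompl := digits_sum_add_digits_sum_pow_sub_one_sub hq m (hθ.trans_le (sub_le _ _))
  obtain ⟨i, hi⟩ := exists_eq_pow_of_digits_sum_eq_one hq (n := q ^ m - 1 - θ) (by omega)
  exact ⟨i, (Nat.pow_lt_pow_iff_right hq).mp (by omega), by omega⟩

/-- `δ = (q-1)q^(m-1) - 1` is a coset leader, and it is the unique coset
leader below `q^m - 1` whose `q`-adic digit sum equals `m(q-1) - 1`. -/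
theorem delta_unique_coset_leader_of_digit_sum
    (q m : ℕ) (hq : ∃ p k : ℕ, p.Prime ∧ 0 < k ∧ q = p ^ k) (hm : 2 ≤ m) :
    (∀ j : ℕ, (q - 1) * q ^ (m - 1) - 1 ≤
        (((q - 1) * q ^ (m - 1) - 1) * q ^ j) % (q ^ m - 1)) ∧
      ∀ θ : ℕ, θ < q ^ m - 1 → (Nat.digits q θ).sum = m * (q - 1) - 1 →
        (∀ j : ℕ, θ ≤ (θ * q ^ j) % (q ^ m - 1)) →
        θ = (q - 1) * q ^ (m - 1) - 1 := by
  have hq_one : 1 < q := by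
    obtain ⟨p, k, hp, hk, rfl⟩ := hq
    exact one_lt_pow hk.ne' hp.one_lt
  have hδ : (q - 1) * q ^ (m - 1) - 1 = q ^ m - 1 - q ^ (m - 1) := by
    have : q * q ^ (m - 1) = q ^ m := by rw [← pow_succ']; congr 1; omega
    rw [Nat.sub_one_mul, this]
    omega
  have hleader := isCosetLeader_pow_sub_one_sub_pow_iff hq_one hm (show m - 1 < m by omega)
  rw [hδ]
  refine ⟨hleader.mpr rfl, fun θ hθ hsum hθleader => ?_⟩
  obtain ⟨i, hi, rfl⟩ := exists_eq_pow_sub_one_sub_pow_of_digits_sum hq_one hθ hsum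
  rw [(isCosetLeader_pow_sub_one_sub_pow_iff hq_one hm hi).mp hθleader]
end

section
/- Let q be a prime power, m ≥ 2, and let θ with 0 ≤ θ < q^m - 1 have q-adic digit sum m(q-1) - 2 and digits all equal to q-1 except two positions m-1 and j (0 ≤ j ≤ m-2) where the digit is q-2. Then θ is a coset leader of its q-cyclotomic coset modulo q^m-1 if and only if j ≥ (m-2)/2. -/
private lemma powModEq (q m c : ℕ) (h : 1 ≤ q ^ m) :
    q ^ c ≡ q ^ (c % m) [MOD q ^ m - 1] := by
  conv_lhs => rw [← Nat.div_add_mod c m]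
  rw [pow_add, pow_mul]
  have h1 : q ^ m ≡ 1 [MOD q ^ m - 1] :=
    ((Nat.modEq_iff_dvd' h).2 dvd_rfl).symm
  calc (q ^ m) ^ (c / m) * q ^ (c % m)
      ≡ 1 ^ (c / m) * q ^ (c % m) [MOD q ^ m - 1] := (h1.pow _).mul_right _
    _ = q ^ (c % m) := by rw [one_pow, one_mul]

private lemma sum_pow_le (q m a b : ℕ) (hq : 2 ≤ q) (hm : 2 ≤ m)
    (ha : a < m) (hb : b < m) (hab : a ≠ b) : q ^ a + q ^ b ≤ q ^ m - 1 := by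
  have hq1 : 1 ≤ q := by omega
  have key : ∀ a b : ℕ, a < b → b < m → q ^ a + q ^ b ≤ q ^ m - 1 := by
    intro a b h1 h2
    have ha2 : q ^ a ≤ q ^ (m - 2) := Nat.pow_le_pow_right hq1 (by omega)
    have hb2 : q ^ b ≤ q ^ (m - 1) := Nat.pow_le_pow_right hq1 (by omega)
    have h3 : q ^ (m - 1) = q ^ (m - 2) * q := by
      rw [← pow_succ]; congr 1; omega
    have h4 : q ^ m = q ^ (m - 2) * q * q := by
      rw [← pow_succ, ← pow_succ]; congr 1; omega
    have h5 : 1 ≤ q ^ (m - 2) := Nat.one_le_pow _ _ (by omega)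
    have p1 : q ^ (m - 2) * q * 2 ≤ q ^ (m - 2) * q * q := Nat.mul_le_mul_left _ hq
    have p2 : q ^ (m - 2) * 2 ≤ q ^ (m - 2) * q := Nat.mul_le_mul_left _ hq
    have : q ^ (m - 2) + q ^ (m - 1) + 1 ≤ q ^ m := by
      rw [h3, h4]; linarith
    omega
  rcases Nat.lt_or_ge a b with h | h
  · exact key a b h hb
  · have h' : b < a := by omega
    have := key b a h' ha
    omega

private lemma residue (q m j l : ℕ) (hq : 2 ≤ q) (hm : 2 ≤ m) (hj : j ≤ m - 2) :
    (q ^ m - 1 - q ^ (m - 1) - q ^ j) * q ^ l % (q ^ m - 1)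
      = q ^ m - 1 - (q ^ ((m - 1 + l) % m) + q ^ ((j + l) % m)) := by
  have hm0 : 0 < m := by omega
  have hqm : 1 ≤ q ^ m := Nat.one_le_pow _ _ (by omega)
  have hq2m : q ^ 2 ≤ q ^ m := Nat.pow_le_pow_right (by omega) hm
  have hq2 : 4 ≤ q ^ 2 := by nlinarith
  set N := q ^ m - 1 with hN
  have hN3 : 3 ≤ N := by omega
  have hjm : j < m - 1 := by omega
  have hs : q ^ (m - 1) + q ^ j ≤ N := sum_pow_le q m (m - 1) j hq hm (by omega) (by omega) (by omega)
  set A := (m - 1 + l) % m with hA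
  set B := (j + l) % m with hB
  have hAm : A < m := Nat.mod_lt _ hm0
  have hBm : B < m := Nat.mod_lt _ hm0
  have hAB : A ≠ B := by
    intro h
    have h1 : m - 1 + l ≡ j + l [MOD m] := h
    have h2 : (m - 1) ≡ j [MOD m] := h1.add_right_cancel' l
    have h3 : (m - 1) % m = j % m := h2
    rw [Nat.mod_eq_of_lt (by omega), Nat.mod_eq_of_lt (by omega)] at h3
    omega
  have hS : q ^ A + q ^ B ≤ N := sum_pow_le q m A B hq hm hAm hBm hAB
  have hS1 : 1 ≤ q ^ A + q ^ B := by
    have := Nat.one_le_pow A q (by omega); omega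
  have hθ : q ^ m - 1 - q ^ (m - 1) - q ^ j = N - (q ^ (m - 1) + q ^ j) := by
    rw [Nat.sub_sub]
  rw [hθ]
  have c1 : (N - (q ^ (m - 1) + q ^ j)) * q ^ l + (q ^ (m - 1) + q ^ j) * q ^ l
      = N * q ^ l := by rw [← add_mul, Nat.sub_add_cancel hs]
  have c2 : (q ^ (m - 1) + q ^ j) * q ^ l ≡ q ^ A + q ^ B [MOD N] := by
    rw [add_mul, ← pow_add, ← pow_add]
    exact (powModEq q m (m - 1 + l) hqm).add (powModEq q m (j + l) hqm)
  have c4 : N * q ^ l ≡ 0 [MOD N] := (Nat.modEq_zero_iff_dvd).2 ⟨q ^ l, rfl⟩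
  have c5 : N ≡ 0 [MOD N] := (Nat.modEq_zero_iff_dvd).2 dvd_rfl
  have main : (N - (q ^ (m - 1) + q ^ j)) * q ^ l + (q ^ A + q ^ B)
      ≡ (N - (q ^ A + q ^ B)) + (q ^ A + q ^ B) [MOD N] := by
    calc (N - (q ^ (m - 1) + q ^ j)) * q ^ l + (q ^ A + q ^ B)
        ≡ (N - (q ^ (m - 1) + q ^ j)) * q ^ l + (q ^ (m - 1) + q ^ j) * q ^ l
          [MOD N] := (Nat.ModEq.refl _).add c2.symm
      _ = N * q ^ l := c1
      _ ≡ 0 [MOD N] := c4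
      _ ≡ N [MOD N] := c5.symm
      _ = (N - (q ^ A + q ^ B)) + (q ^ A + q ^ B) := (Nat.sub_add_cancel hS).symm
  have main2 : (N - (q ^ (m - 1) + q ^ j)) * q ^ l ≡ N - (q ^ A + q ^ B) [MOD N] :=
    Nat.ModEq.add_right_cancel' _ main
  have hlt : N - (q ^ A + q ^ B) < N := by omega
  calc (N - (q ^ (m - 1) + q ^ j)) * q ^ l % N
      = (N - (q ^ A + q ^ B)) % N := main2
    _ = N - (q ^ A + q ^ B) := Nat.mod_eq_of_lt hlt

/-- the integer `θ = q^m - 1 - q^(m-1) - q^j` (all `q`-adic digits `q-1`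
except digit `q-2` at positions `m-1` and `j`, where `0 ≤ j ≤ m-2`) is a coset leader of
its `q`-cyclotomic coset modulo `q^m - 1` iff `j ≥ (m-2)/2`. -/
theorem two_digit_defect_coset_leader_iff
    (q m j : ℕ) (hq : ∃ p k : ℕ, p.Prime ∧ 0 < k ∧ q = p ^ k)
    (hm : 2 ≤ m) (hj : j ≤ m - 2) :
    (∀ l : ℕ, q ^ m - 1 - q ^ (m - 1) - q ^ j ≤
        ((q ^ m - 1 - q ^ (m - 1) - q ^ j) * q ^ l) % (q ^ m - 1)) ↔
      m - 2 ≤ 2 * j := by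
  have hq2 : 2 ≤ q := by
    obtain ⟨p, k, hp, hk, rfl⟩ := hq
    calc 2 ≤ p := hp.two_le
      _ ≤ p ^ k := Nat.le_self_pow (by omega) p
  have hq1 : 1 ≤ q := by omega
  have hm0 : 0 < m := by omega
  set N := q ^ m - 1 with hN
  constructor
  · intro h
    have h0 := h (m - 1 - j)
    rw [residue q m j (m - 1 - j) hq2 hm hj] at h0
    have e1 : (m - 1 + (m - 1 - j)) % m = m - 2 - j := by
      have h1 : m - 1 + (m - 1 - j) = m + (m - 2 - j) := by omega
      rw [h1, Nat.add_mod_left, Nat.mod_eq_of_lt (by omega)]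
    have e2 : (j + (m - 1 - j)) % m = m - 1 := by
      have h1 : j + (m - 1 - j) = m - 1 := by omega
      rw [h1, Nat.mod_eq_of_lt (by omega)]
    rw [e1, e2, Nat.sub_sub] at h0
    have hs1 : q ^ (m - 1) + q ^ j ≤ N :=
      sum_pow_le q m (m - 1) j hq2 hm (by omega) (by omega) (by omega)
    have hs2 : q ^ (m - 2 - j) + q ^ (m - 1) ≤ N :=
      sum_pow_le q m (m - 2 - j) (m - 1) hq2 hm (by omega) (by omega) (by omega)
    have hzy : q ^ (m - 2 - j) ≤ q ^ j := by omega
    have := (Nat.pow_le_pow_iff_right (show 1 < q by omega)).1 hzy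
    omega
  · intro hjm2 l
    rw [residue q m j l hq2 hm hj, Nat.sub_sub]
    apply Nat.sub_le_sub_left
    have hrm : l % m < m := Nat.mod_lt _ hm0
    have eA : (m - 1 + l) % m = (m - 1 + l % m) % m := by
      conv_lhs => rw [← Nat.add_mod_mod]
    have eB : (j + l) % m = (j + l % m) % m := by
      conv_lhs => rw [← Nat.add_mod_mod]
    rw [eA, eB]
    set r := l % m with hr
    by_cases h0 : r = 0
    · rw [h0]
      simp only [Nat.add_zero]
      rw [Nat.mod_eq_of_lt (by omega), Nat.mod_eq_of_lt (by omega)]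
    · by_cases h1 : r = m - 1 - j
      · have e1 : (m - 1 + r) % m = m - 2 - j := by
          have : m - 1 + r = m + (m - 2 - j) := by omega
          rw [this, Nat.add_mod_left, Nat.mod_eq_of_lt (by omega)]
        have e2 : (j + r) % m = m - 1 := by
          have : j + r = m - 1 := by omega
          rw [this, Nat.mod_eq_of_lt (by omega)]
        rw [e1, e2]
        have : q ^ (m - 2 - j) ≤ q ^ j := Nat.pow_le_pow_right hq1 (by omega)
        omega
      · have e1 : (m - 1 + r) % m = r - 1 := by
          have : m - 1 + r = m + (r - 1) := by omega
          rw [this, Nat.add_mod_left, Nat.mod_eq_of_lt (by omega)]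
        have hB1 : (j + r) % m ≤ m - 2 := by
          rcases Nat.lt_or_ge (j + r) m with h | h
          · rw [Nat.mod_eq_of_lt h]; omega
          · have hh : j + r = m + (j + r - m) := by omega
            rw [hh, Nat.add_mod_left, Nat.mod_eq_of_lt (by omega)]; omega
        rw [e1]
        have hA2 : q ^ (r - 1) ≤ q ^ (m - 2) := Nat.pow_le_pow_right hq1 (by omega)
        have hB2 : q ^ ((j + r) % m) ≤ q ^ (m - 2) := Nat.pow_le_pow_right hq1 hB1
        have h3 : q ^ (m - 1) = q ^ (m - 2) * q := by
          rw [← pow_succ]; congr 1; omega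
        have h5 : q ^ (m - 2) * 2 ≤ q ^ (m - 2) * q := Nat.mul_le_mul_left _ hq2
        calc q ^ (r - 1) + q ^ ((j + r) % m)
            ≤ q ^ (m - 2) + q ^ (m - 2) := Nat.add_le_add hA2 hB2
          _ = q ^ (m - 2) * 2 := by ring
          _ ≤ q ^ (m - 2) * q := h5
          _ = q ^ (m - 1) := h3.symm
          _ ≤ q ^ (m - 1) + q ^ j := Nat.le_add_right _ _
end

section
/- Let q be a prime power, m ≥ 1, and let λ_j ∈ F_{q^m} for (m+1)/2 ≤ j ≤ i+1 (m odd, (m-2)/2 ≤ i ≤ m-2), not all zero. Define B(x,y) = Tr^{q^m}_q( (Σ_j (λ_j x^{q^j} + λ_j^{q^{-j}} x^{q^{-j}})) · y ) on F_{q^m}. Then the radical {x ∈ F_{q^m} : B(x,y) = 0 for all y ∈ F_{q^m}} is an F_q-subspace of dimension at most 2i + 2 - m; equivalently, B has rank at least 2m - 2i - 2. -/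
/-!
Since the trace form is nondegenerate, the radical of `B` is the kernel of the `F_q`-linear map
`L x = Σ_j (λ_j x^{q^j} + λ_j^{q^{-j}} x^{q^{-j}})`. Raising to the power `q^{i+1}` and using
`x^{q^m} = x` turns `L(x)^{q^{i+1}}` into a polynomial in `x` of degree at most `q^{2i+2-m}`.
It is nonzero: as `m` is odd, the monomial `x^{q^{i+1-j}}` with `λ_j ≠ 0` comes from the
`λ_j^{q^{-j}}` term alone. Its roots contain `ker L`, so `q^{dim ker L} ≤ q^{2i+2-m}`.
-/

open Polynomial

section Frobenius

variable (F : Type*) {K : Type*} [Field F] [Fintype F]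

theorem frobeniusAlgHom_pow_apply [CommRing K] [Algebra F K] (n : ℕ) (x : K) :
    (FiniteField.frobeniusAlgHom F K ^ n) x = x ^ Fintype.card F ^ n := by
  rw [AlgHom.coe_pow, FiniteField.coe_frobeniusAlgHom, pow_iterate]

theorem pow_card_pow_add_finrank [Field K] [Fintype K] [Algebra F K] (a : ℕ) (x : K) :
    x ^ Fintype.card F ^ (a + Module.finrank F K) = x ^ Fintype.card F ^ a := by
  rw [pow_add, pow_mul, ← Module.card_eq_pow_finrank, FiniteField.pow_card]

end Frobenius

theorem Algebra.forall_trace_mul_eq_zero_iff (F : Type*) {K : Type*} [Field F] [Field K]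
    [Algebra F K] [FiniteDimensional F K] [Algebra.IsSeparable F K] (z : K) :
    (∀ y, Algebra.trace F K (z * y) = 0) ↔ z = 0 :=
  ⟨(traceForm_nondegenerate F K).1 z, fun hz y => by rw [hz, zero_mul, map_zero]⟩

theorem Submodule.finrank_le_of_forall_isRoot {F K : Type*} [Field F] [Fintype F] [Field K]
    [Fintype K] [Algebra F K] (W : Submodule F K) {P : K[X]} (hP : P ≠ 0) {t : ℕ}
    (hdeg : P.natDegree ≤ Fintype.card F ^ t) (hroot : ∀ w ∈ W, P.IsRoot w) :
    Module.finrank F W ≤ t := by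
  classical
  have hcard : (W : Set K).toFinset.card ≤ P.natDegree :=
    card_le_degree_of_subset_roots fun w hw => by
      rw [mem_roots hP]
      exact hroot w (by simpa using hw)
  rw [← Nat.pow_le_pow_iff_right (Fintype.one_lt_card (α := F)), ← Module.card_eq_pow_finrank]
  calc Fintype.card W = (W : Set K).toFinset.card := by simp [Set.toFinset_card]
    _ ≤ _ := hcard.trans hdeg

section SymmLinearized

variable (F : Type*) {K : Type*} [Field F] [Fintype F] [Field K]

local notation "q" => Fintype.card F

noncomputable def symmLinearized [Algebra F K] (m : ℕ) (s : Finset ℕ) (lam : ℕ → K) : K →ₗ[F] K :=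
  ∑ j ∈ s, (LinearMap.mulLeft F (lam j) ∘ₗ (FiniteField.frobeniusAlgHom F K ^ j).toLinearMap
    + LinearMap.mulLeft F (lam j ^ q ^ (m - j)) ∘ₗ
      (FiniteField.frobeniusAlgHom F K ^ (m - j)).toLinearMap)

theorem symmLinearized_apply [Algebra F K] (m : ℕ) (s : Finset ℕ) (lam : ℕ → K) (x : K) :
    symmLinearized F m s lam x =
      ∑ j ∈ s, (lam j * x ^ q ^ j + lam j ^ q ^ (m - j) * x ^ q ^ (m - j)) := by
  simp only [symmLinearized, LinearMap.sum_apply, LinearMap.add_apply,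
    LinearMap.comp_apply, AlgHom.toLinearMap_apply, LinearMap.mulLeft_apply,
    frobeniusAlgHom_pow_apply]

/-- `symmLinearized F m s lam x ^ q ^ k` written as a polynomial in `x` using `x ^ q ^ m = x`. -/
noncomputable def symmLinearizedTwist (m k : ℕ) (s : Finset ℕ) (lam : ℕ → K) : K[X] :=
  ∑ j ∈ s, (C (lam j ^ q ^ k) * X ^ q ^ (j + k - m) + C (lam j ^ q ^ (k - j)) * X ^ q ^ (k - j))

theorem natDegree_symmLinearizedTwist_le {m k t : ℕ} {s : Finset ℕ} (lam : ℕ → K)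
    (hs : ∀ j ∈ s, j + k - m ≤ t ∧ k - j ≤ t) :
    (symmLinearizedTwist F m k s lam).natDegree ≤ q ^ t := by
  have hq : 1 ≤ q := Fintype.card_pos
  refine natDegree_sum_le_of_forall_le _ _ fun j hj => ?_
  refine (natDegree_add_le _ _).trans (max_le ?_ ?_) <;>
    refine (natDegree_C_mul_X_pow_le _ _).trans (Nat.pow_le_pow_right hq ?_)
  exacts [(hs j hj).1, (hs j hj).2]

theorem coeff_symmLinearizedTwist {m k : ℕ} {s : Finset ℕ} (lam : ℕ → K) {j₀ : ℕ}
    (hj₀ : j₀ ∈ s) (hs : ∀ j ∈ s, j ≤ k ∧ m ≤ j + k ∧ j + j₀ ≠ m) :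
    (symmLinearizedTwist F m k s lam).coeff (q ^ (k - j₀)) = lam j₀ ^ q ^ (k - j₀) := by
  have hinj : ∀ a b : ℕ, q ^ a = q ^ b ↔ a = b :=
    fun a b => Nat.pow_right_inj (Fintype.one_lt_card (α := F))
  rw [symmLinearizedTwist, finsetSum_coeff, Finset.sum_eq_single_of_mem j₀ hj₀]
  · have := hs j₀ hj₀
    simp only [coeff_add, coeff_C_mul, coeff_X_pow, hinj]
    rw [if_neg (by omega)]
    simp
  · intro j hj hne
    have := hs j hj
    have := hs j₀ hj₀
    simp only [coeff_add, coeff_C_mul, coeff_X_pow, hinj]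
    rw [if_neg (by omega), if_neg (by omega)]
    simp

theorem symmLinearizedTwist_ne_zero {m k : ℕ} {s : Finset ℕ} {lam : ℕ → K} {j₀ : ℕ}
    (hj₀ : j₀ ∈ s) (hlam : lam j₀ ≠ 0) (hs : ∀ j ∈ s, j ≤ k ∧ m ≤ j + k ∧ j + j₀ ≠ m) :
    symmLinearizedTwist F m k s lam ≠ 0 := fun h =>
  pow_ne_zero (q ^ (k - j₀)) hlam <| by
    rw [← coeff_symmLinearizedTwist F lam hj₀ hs, h, coeff_zero]

theorem eval_symmLinearizedTwist [Algebra F K] [Fintype K] {m k : ℕ} {s : Finset ℕ} (lam : ℕ → K)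
    (hm : Module.finrank F K = m) (hs : ∀ j ∈ s, j ≤ k ∧ j ≤ m ∧ m ≤ j + k) (x : K) :
    (symmLinearizedTwist F m k s lam).eval x = symmLinearized F m s lam x ^ q ^ k := by
  have hwrap : ∀ a b (y : K), a + m = b → y ^ q ^ b = y ^ q ^ a := fun a b y h => by
    rw [← h, ← hm, pow_card_pow_add_finrank]
  rw [← frobeniusAlgHom_pow_apply, symmLinearized_apply, map_sum, symmLinearizedTwist,
    eval_finsetSum]
  refine Finset.sum_congr rfl fun j hj => ?_
  obtain ⟨hjk, hjm, hmj⟩ := hs j hj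
  simp only [map_add, map_mul, map_pow, frobeniusAlgHom_pow_apply, eval_add, eval_mul, eval_C,
    eval_pow, eval_X, ← pow_mul, ← pow_add]
  rw [hwrap (j + k - m) (k + j) x (by omega), hwrap (k - j) (k + (m - j)) _ (by omega),
    hwrap (k - j) (k + (m - j)) x (by omega)]

end SymmLinearized

/-- the radical of the symmetric bilinear form
`B(x,y) = Tr((Σ_j (λ_j x^{q^j} + λ_j^{q^{m-j}} x^{q^{m-j}})) y)` on `F_{q^m}`
(with `m` odd, `(m-2)/2 ≤ i ≤ m-2`, and the `λ_j`, `(m+1)/2 ≤ j ≤ i+1`, not all zero)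
is an `F_q`-subspace of dimension at most `2i + 2 - m`; equivalently, `B` has rank at
least `2m - 2i - 2`. -/
theorem radical_dimension_bound_trace_form
    (F K : Type*) [Field F] [Fintype F] [Field K] [Fintype K] [Algebra F K]
    (m i : ℕ) (hmodd : Odd m) (hfr : Module.finrank F K = m)
    (hi1 : m - 2 ≤ 2 * i) (hi2 : i ≤ m - 2)
    (lam : ℕ → K)
    (hne : ∃ j ∈ Finset.Icc ((m + 1) / 2) (i + 1), lam j ≠ 0)
    (B : K → K → F)
    (hB : ∀ x y, B x y = Algebra.trace F K
      ((∑ j ∈ Finset.Icc ((m + 1) / 2) (i + 1),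
        (lam j * x ^ Fintype.card F ^ j
          + lam j ^ Fintype.card F ^ (m - j) * x ^ Fintype.card F ^ (m - j))) * y)) :
    ∃ W : Submodule F K, (W : Set K) = {x : K | ∀ y : K, B x y = 0} ∧
      Module.finrank F ↥W ≤ 2 * i + 2 - m ∧
      2 * m - 2 * i - 2 ≤ Module.finrank F K - Module.finrank F ↥W := by
  set s := Finset.Icc ((m + 1) / 2) (i + 1)
  set L := symmLinearized F m s lam with hL
  obtain ⟨k, hk⟩ := hmodd
  obtain ⟨j₀, hj₀, hlam⟩ := hne
  have hs : ∀ j ∈ s, (m + 1) / 2 ≤ j ∧ j ≤ i + 1 := fun j hj => Finset.mem_Icc.mp hj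
  have hrad : (LinearMap.ker L : Set K) = {x | ∀ y, B x y = 0} := by
    ext x
    simp only [SetLike.mem_coe, LinearMap.mem_ker, Set.mem_ofPred_eq, hB, hL,
      ← symmLinearized_apply F, Algebra.forall_trace_mul_eq_zero_iff]
  have hP : symmLinearizedTwist F m (i + 1) s lam ≠ 0 :=
    symmLinearizedTwist_ne_zero F hj₀ hlam fun j hj => by
      have := hs j hj; have := hs j₀ hj₀; omega
  have hdim : Module.finrank F (LinearMap.ker L) ≤ 2 * i + 2 - m := by
    refine (LinearMap.ker L).finrank_le_of_forall_isRoot hP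
      (natDegree_symmLinearizedTwist_le F lam fun j hj => by have := hs j hj; omega)
      fun w hw => ?_
    rw [IsRoot, eval_symmLinearizedTwist F lam hfr (fun j hj => by have := hs j hj; omega),
      LinearMap.mem_ker.mp hw, zero_pow (by positivity)]
  refine ⟨LinearMap.ker L, hrad, hdim, ?_⟩
  have := (LinearMap.ker L).finrank_le
  omega
end

section
/- Let q be an even prime power, m ≥ 1, and let Q(x) = Σ_{j=1}^r x_{2j-1}x_{2j} (rank 2r, type 0) be a quadratic form on F_q^m with 2r ≤ m. As (b_1,...,b_m) ranges over F_q^m and f(x) = Q(x) + Σ b_j x_j, the number of zeros N(f) equals: q^{m-1} for exactly q^m - q^{2r} choices; q^{m-1} + (q-1)q^{m-r-1} for exactly q^{2r-1} + (q-1)q^{r-1} choices; and q^{m-1} - q^{m-r-1} for exactly (q-1)(q^{2r-1} - q^{r-1}) choices. -/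
/-!
Split the coordinates into the `r` hyperbolic pairs `(u, v)` and the `m - 2r` coordinates `z`
not occurring in `Q`, and write `b = ((s, t), w)` accordingly. If `w_l ≠ 0`, moving `z_l`
shifts `f` by an arbitrary constant, so all fibres of `f` have the same size `q^(m-1)`. If
`w = 0`, the substitution `u ↦ u + t`, `v ↦ v + s` turns `f = 0` into `u ⬝ v = s ⬝ t` (with `z`
free), and counting `v` for each fixed `u` gives `q^(2r-1) + (q-1)q^(r-1)` solutions `(u, v)` when
`s ⬝ t = 0` and `q^(2r-1) - q^(r-1)` otherwise. The three resulting values of `N(f)` are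
distinct, which classifies the `b`.
-/

section FiberCount

variable {F V : Type*} [Field F] [Fintype F] [AddCommGroup V] [Module F V] [Finite V]

-- Translating along `v` maps each fiber of `f` bijectively onto any other one.
theorem card_mul_card_fiber_eq (f : V → F) (v : V) (hf : ∀ x (a : F), f (x + a • v) = f x + a)
    (c : F) : Fintype.card F * Nat.card {x // f x = c} = Nat.card V := by
  have hfiber : ∀ d, Nat.card {x // f x = d} = Nat.card {x // f x = c} := fun d =>
    Nat.card_congr
      { toFun := fun x => ⟨x.1 + (c - d) • v, by rw [hf, x.2]; ring⟩
        invFun := fun x => ⟨x.1 + (d - c) • v, by rw [hf, x.2]; ring⟩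
        left_inv := fun x => by ext; simp [add_assoc, ← add_smul]
        right_inv := fun x => by ext; simp [add_assoc, ← add_smul] }
  rw [← Nat.card_congr (Equiv.sigmaFiberEquiv f), Nat.card_sigma, Finset.sum_congr rfl
    fun d _ => hfiber d, Finset.sum_const, Finset.card_univ, smul_eq_mul]

theorem card_fiber_eq_pow_pred (f : V → F) (v : V) (hf : ∀ x (a : F), f (x + a • v) = f x + a)
    (c : F) {n : ℕ} (hV : Nat.card V = Fintype.card F ^ n) :
    Nat.card {x // f x = c} = Fintype.card F ^ (n - 1) := by
  have h := card_mul_card_fiber_eq f v hf c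
  have hq : 1 < Fintype.card F := Fintype.one_lt_card
  rcases n with _ | n
  · rw [hV, pow_zero] at h
    exact absurd (Nat.eq_one_of_mul_eq_one_right h) hq.ne'
  · rw [hV, pow_succ'] at h
    exact Nat.eq_of_mul_eq_mul_left (by omega) h

end FiberCount

section Products

variable {α β : Type*}

theorem card_subtype_snd_ne [Finite β] (b₀ : β) :
    Nat.card {p : α × β // p.2 ≠ b₀} = Nat.card α * (Nat.card β - 1) := by
  classical
  have := Fintype.ofFinite β
  have e : {p : α × β // p.2 ≠ b₀} ≃ α × {b // b ≠ b₀} :=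
    { toFun := fun p => (p.1.1, ⟨p.1.2, p.2⟩)
      invFun := fun p => ⟨(p.1, p.2.1), p.2.2⟩
      left_inv := fun _ => rfl
      right_inv := fun _ => rfl }
  rw [Nat.card_congr e, Nat.card_prod,
    Nat.card_eq_fintype_card (α := {b // b ≠ b₀}), Fintype.card_subtype_compl,
    Fintype.card_subtype_eq, Nat.card_eq_fintype_card (α := β)]

theorem card_subtype_and_snd_eq (P : α → Prop) (b₀ : β) :
    Nat.card {p : α × β // P p.1 ∧ p.2 = b₀} = Nat.card {a // P a} := by
  rw [Nat.card_congr (Equiv.subtypeProdEquivProd (p := P) (q := (· = b₀))), Nat.card_prod,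
    Nat.card_unique (α := {b // b = b₀}), mul_one]

end Products

open Matrix

section DotProduct

variable {F ι : Type*} [Field F] [Fintype F] [Fintype ι]

theorem card_dotProduct_eq_of_left_ne_zero {a : ι → F} (ha : a ≠ 0) (c : F) :
    Nat.card {v : ι → F // a ⬝ᵥ v = c} = Fintype.card F ^ (Fintype.card ι - 1) := by
  classical
  obtain ⟨i, hi⟩ := Function.ne_iff.1 ha
  refine card_fiber_eq_pow_pred _ (Pi.single i (a i)⁻¹) (fun x t => ?_) c (by simp)
  simp [dotProduct_add, dotProduct_smul, dotProduct_single, mul_inv_cancel₀ hi]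

theorem card_pairs_dotProduct_eq_add (c : F) :
    Nat.card {p : (ι → F) × (ι → F) // p.1 ⬝ᵥ p.2 = c} =
      Nat.card {v : ι → F // (0 : ι → F) ⬝ᵥ v = c}
        + (Fintype.card F ^ Fintype.card ι - 1) * Fintype.card F ^ (Fintype.card ι - 1) := by
  classical
  rw [Nat.card_congr (Equiv.subtypeProdEquivSigmaSubtype fun u v => u ⬝ᵥ v = c), Nat.card_sigma,
    ← Finset.add_sum_erase _ _ (Finset.mem_univ 0),
    Finset.sum_congr rfl fun u hu =>
      card_dotProduct_eq_of_left_ne_zero (Finset.ne_of_mem_erase hu) c,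
    Finset.sum_const, Finset.card_erase_of_mem (Finset.mem_univ _), Finset.card_univ,
    Fintype.card_fun, smul_eq_mul]

theorem card_pairs_dotProduct_eq_zero [Nonempty ι] :
    Nat.card {p : (ι → F) × (ι → F) // p.1 ⬝ᵥ p.2 = 0} =
      Fintype.card F ^ (2 * Fintype.card ι - 1)
        + (Fintype.card F - 1) * Fintype.card F ^ (Fintype.card ι - 1) := by
  have hq : 1 ≤ Fintype.card F := Fintype.card_pos
  have h0 : Nat.card {v : ι → F // (0 : ι → F) ⬝ᵥ v = 0} = Fintype.card F ^ Fintype.card ι := by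
    simp [Nat.card_fun, Nat.card_eq_fintype_card]
  obtain ⟨n, hn⟩ : ∃ n, Fintype.card ι = n + 1 :=
    ⟨_, (Nat.succ_pred_eq_of_pos Fintype.card_pos).symm⟩
  rw [card_pairs_dotProduct_eq_add, h0, hn, show 2 * (n + 1) - 1 = 2 * n + 1 by omega,
    Nat.add_sub_cancel]
  zify [hq, Nat.one_le_pow _ _ hq]
  ring

theorem card_pairs_dotProduct_eq_of_ne_zero {c : F} (hc : c ≠ 0) :
    Nat.card {p : (ι → F) × (ι → F) // p.1 ⬝ᵥ p.2 = c} =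
      Fintype.card F ^ (2 * Fintype.card ι - 1) - Fintype.card F ^ (Fintype.card ι - 1) := by
  rw [card_pairs_dotProduct_eq_add, Nat.sub_mul, one_mul, ← pow_add,
    show Fintype.card ι + (Fintype.card ι - 1) = 2 * Fintype.card ι - 1 by omega]
  simp [hc.symm]

theorem card_pairs_dotProduct_ne_zero :
    Nat.card {p : (ι → F) × (ι → F) // p.1 ⬝ᵥ p.2 ≠ 0} =
      (Fintype.card F - 1)
        * (Fintype.card F ^ (2 * Fintype.card ι - 1) - Fintype.card F ^ (Fintype.card ι - 1)) := by
  classical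
  rw [← Nat.card_congr (Equiv.sigmaSubtypeFiberEquivSubtype (fun p => p.1 ⬝ᵥ p.2)
      (p := fun p : (ι → F) × (ι → F) => p.1 ⬝ᵥ p.2 ≠ 0) (q := (· ≠ 0)) fun _ => Iff.rfl),
    Nat.card_sigma,
    Finset.sum_congr rfl fun c _ => card_pairs_dotProduct_eq_of_ne_zero c.2, Finset.sum_const,
    Finset.card_univ, smul_eq_mul, Fintype.card_subtype_compl, Fintype.card_subtype_eq]

end DotProduct

section HyperbolicPlusLinear

variable {F ι κ : Type*} [Field F] [Fintype F] [Fintype ι] [Fintype κ]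

/-- With `b = ((s, t), w)` and `x = ((u, v), z)`, this is `u ⬝ v + s ⬝ u + t ⬝ v + w ⬝ z`:
the polynomial `Q(x) + Σ bⱼ xⱼ` once the coordinates are split into the `r` hyperbolic pairs
and the coordinates not occurring in `Q`. -/
def hyperbolicPlusLinear (b x : ((ι → F) × (ι → F)) × (κ → F)) : F :=
  x.1.1 ⬝ᵥ x.1.2 + (b.1.1 ⬝ᵥ x.1.1 + b.1.2 ⬝ᵥ x.1.2 + b.2 ⬝ᵥ x.2)

theorem card_hyperbolicPlusLinear_eq_zero_of_snd_ne_zero {b : ((ι → F) × (ι → F)) × (κ → F)}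
    (hb : b.2 ≠ 0) :
    Nat.card {x // hyperbolicPlusLinear b x = 0}
      = Fintype.card F ^ (2 * Fintype.card ι + Fintype.card κ - 1) := by
  classical
  obtain ⟨l, hl⟩ := Function.ne_iff.1 hb
  refine card_fiber_eq_pow_pred _ ((0, 0), Pi.single l (b.2 l)⁻¹) (fun x a => ?_) 0 ?_
  · simp only [hyperbolicPlusLinear, Prod.smul_mk, smul_zero, Prod.fst_add, Prod.snd_add,
      add_zero, dotProduct_add, dotProduct_smul, dotProduct_single, mul_inv_cancel₀ hl,
      smul_eq_mul, mul_one]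
    ring
  · simp [pow_add, two_mul]

theorem card_hyperbolicPlusLinear_eq_zero_of_snd_eq_zero {b : ((ι → F) × (ι → F)) × (κ → F)}
    (hb : b.2 = 0) :
    Nat.card {x // hyperbolicPlusLinear b x = 0}
      = Nat.card {p : (ι → F) × (ι → F) // p.1 ⬝ᵥ p.2 = b.1.1 ⬝ᵥ b.1.2}
        * Fintype.card F ^ Fintype.card κ := by
  obtain ⟨⟨s, t⟩, w⟩ := b
  obtain rfl : w = 0 := hb
  have hshift : {x // hyperbolicPlusLinear ((s, t), 0) x = 0}
      ≃ {x : ((ι → F) × (ι → F)) × (κ → F) // x.1.1 ⬝ᵥ x.1.2 = s ⬝ᵥ t} :=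
    (Equiv.addRight (((t, s), 0) : ((ι → F) × (ι → F)) × (κ → F))).subtypeEquiv fun x => by
      simp only [hyperbolicPlusLinear, Equiv.coe_addRight, Prod.fst_add, Prod.snd_add,
        add_dotProduct, dotProduct_add, zero_dotProduct, add_zero]
      rw [dotProduct_comm x.1.1 s, dotProduct_comm t s]
      constructor <;> intro h <;> linear_combination h
  rw [Nat.card_congr (hshift.trans (Equiv.prodSubtypeFstEquivSubtypeProd
    (p := fun p : (ι → F) × (ι → F) => p.1 ⬝ᵥ p.2 = s ⬝ᵥ t))), Nat.card_prod,
    Nat.card_fun, Nat.card_eq_fintype_card (α := F), Nat.card_eq_fintype_card (α := κ)]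

theorem card_hyperbolicPlusLinear_eq_zero_of_dotProduct_eq_zero [Nonempty ι]
    {b : ((ι → F) × (ι → F)) × (κ → F)} (h₁ : b.1.1 ⬝ᵥ b.1.2 = 0) (h₂ : b.2 = 0) :
    Nat.card {x // hyperbolicPlusLinear b x = 0}
      = Fintype.card F ^ (2 * Fintype.card ι + Fintype.card κ - 1)
        + (Fintype.card F - 1)
          * Fintype.card F ^ (2 * Fintype.card ι + Fintype.card κ - Fintype.card ι - 1) := by
  have hr : 1 ≤ Fintype.card ι := Fintype.card_pos
  rw [card_hyperbolicPlusLinear_eq_zero_of_snd_eq_zero h₂, h₁, card_pairs_dotProduct_eq_zero,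
    add_mul, mul_assoc, ← pow_add, ← pow_add]
  congr 3 <;> omega

theorem card_hyperbolicPlusLinear_eq_zero_of_dotProduct_ne_zero [Nonempty ι]
    {b : ((ι → F) × (ι → F)) × (κ → F)} (h₁ : b.1.1 ⬝ᵥ b.1.2 ≠ 0) (h₂ : b.2 = 0) :
    Nat.card {x // hyperbolicPlusLinear b x = 0}
      = Fintype.card F ^ (2 * Fintype.card ι + Fintype.card κ - 1)
        - Fintype.card F ^ (2 * Fintype.card ι + Fintype.card κ - Fintype.card ι - 1) := by
  have hr : 1 ≤ Fintype.card ι := Fintype.card_pos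
  rw [card_hyperbolicPlusLinear_eq_zero_of_snd_eq_zero h₂, card_pairs_dotProduct_eq_of_ne_zero h₁,
    Nat.sub_mul, ← pow_add, ← pow_add]
  congr 2 <;> omega

theorem card_hyperbolicPlusLinear_zero_counts [Nonempty ι] :
    Nat.card {b : ((ι → F) × (ι → F)) × (κ → F) //
        Nat.card {x // hyperbolicPlusLinear b x = 0}
          = Fintype.card F ^ (2 * Fintype.card ι + Fintype.card κ - 1)}
      = Fintype.card F ^ (2 * Fintype.card ι + Fintype.card κ)
          - Fintype.card F ^ (2 * Fintype.card ι) ∧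
    Nat.card {b : ((ι → F) × (ι → F)) × (κ → F) //
        Nat.card {x // hyperbolicPlusLinear b x = 0}
          = Fintype.card F ^ (2 * Fintype.card ι + Fintype.card κ - 1)
            + (Fintype.card F - 1)
              * Fintype.card F ^ (2 * Fintype.card ι + Fintype.card κ - Fintype.card ι - 1)}
      = Fintype.card F ^ (2 * Fintype.card ι - 1)
          + (Fintype.card F - 1) * Fintype.card F ^ (Fintype.card ι - 1) ∧
    Nat.card {b : ((ι → F) × (ι → F)) × (κ → F) //
        Nat.card {x // hyperbolicPlusLinear b x = 0}
          = Fintype.card F ^ (2 * Fintype.card ι + Fintype.card κ - 1)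
            - Fintype.card F ^ (2 * Fintype.card ι + Fintype.card κ - Fintype.card ι - 1)}
      = (Fintype.card F - 1) * (Fintype.card F ^ (2 * Fintype.card ι - 1)
          - Fintype.card F ^ (Fintype.card ι - 1)) := by
  have hV₁ := fun b : ((ι → F) × (ι → F)) × (κ → F) =>
    card_hyperbolicPlusLinear_eq_zero_of_snd_ne_zero (b := b)
  have hV₂ := fun b : ((ι → F) × (ι → F)) × (κ → F) =>
    card_hyperbolicPlusLinear_eq_zero_of_dotProduct_eq_zero (b := b)
  have hV₃ := fun b : ((ι → F) × (ι → F)) × (κ → F) =>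
    card_hyperbolicPlusLinear_eq_zero_of_dotProduct_ne_zero (b := b)
  have hq : 2 ≤ Fintype.card F := Fintype.one_lt_card
  set q := Fintype.card F
  set r := Fintype.card ι
  set k := Fintype.card κ
  have hlt₁ : q ^ (2 * r + k - 1) - q ^ (2 * r + k - r - 1) < q ^ (2 * r + k - 1) :=
    Nat.sub_lt (by positivity) (by positivity)
  have hlt₂ : q ^ (2 * r + k - 1) < q ^ (2 * r + k - 1) + (q - 1) * q ^ (2 * r + k - r - 1) :=
    Nat.lt_add_of_pos_right (Nat.mul_pos (by omega) (by positivity))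
  generalize q ^ (2 * r + k - 1) = A at *
  generalize q ^ (2 * r + k - r - 1) = B at *
  have hclassify : ∀ b : ((ι → F) × (ι → F)) × (κ → F),
      (Nat.card {x // hyperbolicPlusLinear b x = 0} = A ↔ b.2 ≠ 0) ∧
      (Nat.card {x // hyperbolicPlusLinear b x = 0} = A + (q - 1) * B
        ↔ b.1.1 ⬝ᵥ b.1.2 = 0 ∧ b.2 = 0) ∧
      (Nat.card {x // hyperbolicPlusLinear b x = 0} = A - B
        ↔ b.1.1 ⬝ᵥ b.1.2 ≠ 0 ∧ b.2 = 0) := by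
    intro b
    by_cases h₂ : b.2 = 0
    · by_cases h₁ : b.1.1 ⬝ᵥ b.1.2 = 0
      · rw [hV₂ b h₁ h₂]
        exact ⟨iff_of_false (by omega) (· h₂), iff_of_true rfl ⟨h₁, h₂⟩,
          iff_of_false (by omega) (·.1 h₁)⟩
      · rw [hV₃ b h₁ h₂]
        exact ⟨iff_of_false (by omega) (· h₂), iff_of_false (by omega) (h₁ ·.1),
          iff_of_true rfl ⟨h₁, h₂⟩⟩
    · rw [hV₁ b h₂]
      exact ⟨iff_of_true rfl h₂, iff_of_false (by omega) (h₂ ·.2),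
        iff_of_false (by omega) (h₂ ·.2)⟩
  refine ⟨?_, ?_, ?_⟩
  · rw [Nat.card_congr (Equiv.subtypeEquivRight fun b => (hclassify b).1), card_subtype_snd_ne]
    simp only [Nat.card_prod, Nat.card_fun, Nat.card_eq_fintype_card]
    rw [Nat.mul_sub, mul_one]
    congr 1 <;> ring
  · rw [Nat.card_congr (Equiv.subtypeEquivRight fun b => (hclassify b).2.1),
      card_subtype_and_snd_eq (fun p : (ι → F) × (ι → F) => p.1 ⬝ᵥ p.2 = 0),
      card_pairs_dotProduct_eq_zero]
  · rw [Nat.card_congr (Equiv.subtypeEquivRight fun b => (hclassify b).2.2),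
      card_subtype_and_snd_eq (fun p : (ι → F) × (ι → F) => p.1 ⬝ᵥ p.2 ≠ 0),
      card_pairs_dotProduct_ne_zero]

end HyperbolicPlusLinear

section Coordinates

variable {F ι κ α : Type*} [Field F]

def splitCoords (e : (ι ⊕ ι) ⊕ κ ≃ α) : (α → F) ≃ ((ι → F) × (ι → F)) × (κ → F) :=
  (e.symm.arrowCongr (Equiv.refl F)).trans ((Equiv.sumArrowEquivProdArrow _ _ _).trans
    ((Equiv.sumArrowEquivProdArrow _ _ _).prodCongr (Equiv.refl _)))

theorem hyperbolicPlusLinear_splitCoords [Fintype ι] [Fintype κ] [Fintype α]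
    (e : (ι ⊕ ι) ⊕ κ ≃ α) (b x : α → F) :
    hyperbolicPlusLinear (splitCoords e b) (splitCoords e x)
      = ∑ j, x (e (.inl (.inl j))) * x (e (.inl (.inr j))) + b ⬝ᵥ x := by
  simp only [hyperbolicPlusLinear, dotProduct]
  rw [← e.sum_comp]
  simp [splitCoords, Fintype.sum_sum_type, add_assoc]

noncomputable def evenOddTailEquiv {m r : ℕ} (h : 2 * r ≤ m) :
    (Fin r ⊕ Fin r) ⊕ Fin (m - 2 * r) ≃ Fin m :=
  Equiv.ofBijective
    (Sum.elim (Sum.elim (fun j => ⟨2 * j, by omega⟩) (fun j => ⟨2 * j + 1, by omega⟩))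
      (fun l => ⟨2 * r + l, by omega⟩))
    ((Fintype.bijective_iff_injective_and_card _).2
      ⟨by rintro ((a | a) | a) ((b | b) | b) hab <;> simp [Fin.ext_iff] at hab ⊢ <;> omega,
        by simp; omega⟩)

end Coordinates

/-- let `q` be even and `Q(x) = Σ_{j=1}^r x_{2j-1}x_{2j}` (rank `2r`,
type `0`) on `F_q^m` with `2r ≤ m`. As `b` ranges over `F_q^m` and
`f(x) = Q(x) + Σ b_j x_j`, the number of zeros `N(f)` equals `q^(m-1)` for exactly
`q^m - q^(2r)` choices of `b`, `q^(m-1) + (q-1)q^(m-r-1)` for exactly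
`q^(2r-1) + (q-1)q^(r-1)` choices, and `q^(m-1) - q^(m-r-1)` for exactly
`(q-1)(q^(2r-1) - q^(r-1))` choices. -/
theorem zero_counts_even_char_type_zero_plus_linear
    (F : Type*) [Field F] [Fintype F]
    (m r : ℕ) (hr : 1 ≤ r) (hrm : 2 * r ≤ m)
    (Q : (Fin m → F) → F)
    (hQ : ∀ x, Q x = ∑ j : Fin r,
      x ⟨2 * j.1, by have := j.2; omega⟩ * x ⟨2 * j.1 + 1, by have := j.2; omega⟩) :
    Nat.card {b : Fin m → F //
        Nat.card {x : Fin m → F // Q x + ∑ j, b j * x j = 0}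
          = Fintype.card F ^ (m - 1)}
      = Fintype.card F ^ m - Fintype.card F ^ (2 * r) ∧
    Nat.card {b : Fin m → F //
        Nat.card {x : Fin m → F // Q x + ∑ j, b j * x j = 0}
          = Fintype.card F ^ (m - 1)
            + (Fintype.card F - 1) * Fintype.card F ^ (m - r - 1)}
      = Fintype.card F ^ (2 * r - 1) + (Fintype.card F - 1) * Fintype.card F ^ (r - 1) ∧
    Nat.card {b : Fin m → F //
        Nat.card {x : Fin m → F // Q x + ∑ j, b j * x j = 0}
          = Fintype.card F ^ (m - 1) - Fintype.card F ^ (m - r - 1)}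
      = (Fintype.card F - 1)
          * (Fintype.card F ^ (2 * r - 1) - Fintype.card F ^ (r - 1)) := by
  have : Nonempty (Fin r) := ⟨⟨0, hr⟩⟩
  let T := splitCoords (F := F) (evenOddTailEquiv hrm)
  have hT : ∀ b, Nat.card {x : Fin m → F // Q x + ∑ j, b j * x j = 0}
      = Nat.card {y // hyperbolicPlusLinear (T b) y = 0} := fun b =>
    Nat.card_congr (T.subtypeEquiv fun x => by rw [hyperbolicPlusLinear_splitCoords, hQ]; rfl)
  have hm : 2 * r + (m - 2 * r) = m := by omega
  obtain ⟨h₁, h₂, h₃⟩ :=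
    card_hyperbolicPlusLinear_zero_counts (F := F) (ι := Fin r) (κ := Fin (m - 2 * r))
  simp only [Fintype.card_fin, hm] at h₁ h₂ h₃
  simp only [hT]
  exact ⟨(Nat.card_congr (Equiv.subtypeEquivOfSubtype T)).trans h₁,
    (Nat.card_congr (Equiv.subtypeEquivOfSubtype T)).trans h₂,
    (Nat.card_congr (Equiv.subtypeEquivOfSubtype T)).trans h₃⟩
end
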